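/- arXiv:2412.11454 — 2 statements merged into one kernel-verified Lean document; each statement's English description precedes it below -/
import Mathlib

section
/- Under the relative-degree-one Lyapunov-design setup, the tracking error is square-integrable and bounded and the parameter estimate is bounded: ∫_0^∞ ‖e(t)‖² dt < ∞, sup_{t ≥ 0} ‖e(t)‖ < ∞, and sup_{t ≥ 0} ‖Θ(t)‖ < ∞ (i.e. e ∈ L² ∩ L^∞ and Θ ∈ L^∞). -/
/-!
Along solutions, `V = eᵀPe + tr[(Θ - Θ*) M_s⁻¹ (Θ - Θ*)ᵀ]` has derivative `-eᵀQe`: the error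
equation contributes `-eᵀQe` plus the cross term `2 eᵀP K_p (Θ - Θ*)ᵀω`, and the adaptive law
cancels that cross term exactly because `M_s⁻¹ Sᵀ = K_pᵀ`. Hence `V(t) ≤ V(0)`, and as `V`
dominates positive multiples of `‖e‖²` and `‖Θ - Θ*‖²`, both stay bounded. Integrating,
`∫₀ᵀ eᵀQe = V(0) - V(T) ≤ V(0)`, and `eᵀQe` dominates a positive multiple of `‖e‖²`.
-/

open Matrix BigOperators MeasureTheory

theorem exists_pos_mul_norm_sq_le_of_homogeneous {E : Type*} [NormedAddCommGroup E]
    [NormedSpace ℝ E] [FiniteDimensional ℝ E] {q : E → ℝ} (hq : Continuous q)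
    (hsmul : ∀ (c : ℝ) x, q (c • x) = c ^ 2 * q x) (hpos : ∀ x ≠ 0, 0 < q x) :
    ∃ c > 0, ∀ x, c * ‖x‖ ^ 2 ≤ q x := by
  have hq0 : q 0 = 0 := by simpa using hsmul 0 0
  rcases subsingleton_or_nontrivial E with hE | hE
  · exact ⟨1, one_pos, fun x => by simp [Subsingleton.elim x 0, hq0]⟩
  obtain ⟨x₀, hx₀, hmin⟩ := (isCompact_sphere (0 : E) 1).exists_isMinOn
    (NormedSpace.sphere_nonempty.2 zero_le_one) hq.continuousOn
  refine ⟨q x₀, hpos x₀ (ne_zero_of_mem_unit_sphere ⟨x₀, hx₀⟩), fun x => ?_⟩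
  rcases eq_or_ne x 0 with rfl | hx
  · simp [hq0]
  have hu : ‖x‖⁻¹ • x ∈ Metric.sphere (0 : E) 1 := by simp [norm_smul, hx]
  calc q x₀ * ‖x‖ ^ 2 ≤ q (‖x‖⁻¹ • x) * ‖x‖ ^ 2 := by gcongr; exact hmin hu
    _ = q x := by rw [hsmul]; field_simp

theorem Matrix.PosDef.exists_pos_mul_sum_sq_le {n : Type*} [Fintype n] {A : Matrix n n ℝ}
    (hA : A.PosDef) : ∃ c > 0, ∀ x : n → ℝ, c * ∑ j, x j ^ 2 ≤ x ⬝ᵥ A *ᵥ x := by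
  obtain ⟨c, hc, hle⟩ := exists_pos_mul_norm_sq_le_of_homogeneous
    (q := fun x : EuclideanSpace ℝ n => x.ofLp ⬝ᵥ A *ᵥ x.ofLp) (by fun_prop)
    (fun c x => by
      simp only [WithLp.ofLp_smul, mulVec_smul, dotProduct_smul, smul_dotProduct, smul_eq_mul]
      ring)
    (fun x hx => hA.dotProduct_mulVec_pos (by simpa using hx))
  exact ⟨c, hc, fun x => by simpa [EuclideanSpace.real_norm_sq_eq] using hle (WithLp.toLp 2 x)⟩

theorem Matrix.IsSymm.dotProduct_mulVec_comm {n α : Type*} [Fintype n] [CommSemiring α]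
    {A : Matrix n n α} (hA : A.IsSymm) (x y : n → α) :
    x ⬝ᵥ A *ᵥ y = y ⬝ᵥ A *ᵥ x := by
  rw [dotProduct_mulVec, dotProduct_comm, ← mulVec_transpose, hA]

theorem Matrix.inv_mul_transpose_eq_transpose {m α : Type*} [Fintype m] [DecidableEq m]
    [CommRing α] {K S : Matrix m m α} (hK : IsUnit K.det) (hKS : (K⁻¹ * S).IsSymm)
    (hKS' : IsUnit (K⁻¹ * S).det) : (K⁻¹ * S)⁻¹ * Sᵀ = Kᵀ := by
  have h : Sᵀ = K⁻¹ * S * Kᵀ := by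
    rw [← hKS, ← transpose_mul, ← Matrix.mul_assoc, mul_nonsing_inv _ hK, Matrix.one_mul]
  rw [h, ← Matrix.mul_assoc, nonsing_inv_mul _ hKS', Matrix.one_mul]

theorem Matrix.row_eq_neg_smul_of_transpose_eq_neg_vecMulVec {m n α : Type*} [CommRing α]
    {X : Matrix n m α} {u : m → α} {w : n → α} (h : Xᵀ = -vecMulVec u w) (i : n) :
    X i = -(w i • u) := by
  rw [← transpose_transpose X, h, transpose_neg, transpose_vecMulVec]
  ext j
  simp [vecMulVec_apply]

theorem Matrix.sum_sq_le_two_mul_sum_sq_sub_add {m n : Type*} [Fintype m] [Fintype n]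
    (X Y : Matrix n m ℝ) :
    ∑ i, ∑ j, X i j ^ 2 ≤ 2 * ∑ i, ∑ j, (X - Y) i j ^ 2 + 2 * ∑ i, ∑ j, Y i j ^ 2 := by
  simp only [Finset.mul_sum, ← Finset.sum_add_distrib, ← mul_add]
  gcongr with i _ j _
  simpa using add_sq_le (a := X i j - Y i j) (b := Y i j)

section Deriv

variable {m n : Type*} [Fintype m] [Fintype n] {f g : ℝ → n → ℝ} {f' g' : n → ℝ} {t : ℝ}

theorem HasDerivAt.dotProduct (hf : HasDerivAt f f' t) (hg : HasDerivAt g g' t) :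
    HasDerivAt (fun s => f s ⬝ᵥ g s) (f' ⬝ᵥ g t + f t ⬝ᵥ g') t := by
  have h := HasDerivAt.fun_sum (u := Finset.univ) fun j _ =>
    (hasDerivAt_pi.1 hf j).fun_mul (hasDerivAt_pi.1 hg j)
  rwa [Finset.sum_add_distrib] at h

theorem HasDerivAt.matrix_mulVec (A : Matrix m n ℝ) (hf : HasDerivAt f f' t) :
    HasDerivAt (fun s => A *ᵥ f s) (A *ᵥ f') t :=
  (Matrix.mulVecLin A).toContinuousLinearMap.hasFDerivAt.comp_hasDerivAt t hf

theorem HasDerivAt.dotProduct_mulVec_self {A : Matrix n n ℝ} (hA : A.IsSymm)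
    (hf : HasDerivAt f f' t) :
    HasDerivAt (fun s => f s ⬝ᵥ A *ᵥ f s) (2 * (f t ⬝ᵥ A *ᵥ f')) t := by
  convert hf.dotProduct (hf.matrix_mulVec A) using 1
  rw [hA.dotProduct_mulVec_comm f']
  ring

end Deriv

section Dissipation

variable {V W : ℝ → ℝ}

theorem add_integral_eq_of_hasDerivAt_neg (hW : Continuous W)
    (hV : ∀ t, 0 ≤ t → HasDerivAt V (-W t) t) {T : ℝ} (hT : 0 ≤ T) :
    V T + ∫ s in (0 : ℝ)..T, W s = V 0 := by
  have h := intervalIntegral.integral_eq_sub_of_hasDerivAt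
    (fun s hs => hV s (Set.uIcc_of_le hT ▸ hs).1) (hW.neg.intervalIntegrable 0 T)
  rw [intervalIntegral.integral_neg] at h
  linarith

theorem apply_le_apply_zero_of_hasDerivAt_neg (hW : Continuous W) (hW₀ : ∀ t, 0 ≤ W t)
    (hV : ∀ t, 0 ≤ t → HasDerivAt V (-W t) t) {T : ℝ} (hT : 0 ≤ T) : V T ≤ V 0 := by
  have := intervalIntegral.integral_nonneg (μ := volume) hT fun s _ => hW₀ s
  linarith [add_integral_eq_of_hasDerivAt_neg hW hV hT]

theorem integrableOn_Ici_of_hasDerivAt_neg (hW : Continuous W) (hW₀ : ∀ t, 0 ≤ W t)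
    (hV₀ : ∀ t, 0 ≤ t → 0 ≤ V t) (hV : ∀ t, 0 ≤ t → HasDerivAt V (-W t) t) :
    IntegrableOn W (Set.Ici 0) := by
  rw [integrableOn_Ici_iff_integrableOn_Ioi]
  refine integrableOn_Ioi_of_intervalIntegral_norm_bounded (V 0) 0
    (fun T => hW.integrableOn_Ioc) Filter.tendsto_id ?_
  filter_upwards [Filter.eventually_ge_atTop 0] with T hT
  simp only [id, Real.norm_of_nonneg (hW₀ _)]
  linarith [add_integral_eq_of_hasDerivAt_neg hW hV hT, hV₀ T hT]

end Dissipation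

section LyapunovDesign

variable {m n : Type*} [Fintype m] [Fintype n]

/-- The paper's `tr[(Θ - Θ*) B (Θ - Θ*)ᵀ]` appears as the sum over the rows of `Θ - Θ*`. -/
def trackingLyapunov (P B : Matrix m m ℝ) (Θs Θ : Matrix n m ℝ) (x : m → ℝ) : ℝ :=
  x ⬝ᵥ P *ᵥ x + ∑ i, (Θ - Θs) i ⬝ᵥ B *ᵥ (Θ - Θs) i

theorem exists_pos_mul_sum_sq_le_trackingLyapunov {P B : Matrix m m ℝ} (hP : P.PosDef)
    (hB : B.PosDef) (Θs : Matrix n m ℝ) :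
    ∃ c > 0, ∀ Θ x, c * ∑ j, x j ^ 2 ≤ trackingLyapunov P B Θs Θ x ∧
      c * ∑ i, ∑ j, (Θ - Θs) i j ^ 2 ≤ trackingLyapunov P B Θs Θ x := by
  obtain ⟨cP, hcP, hP'⟩ := hP.exists_pos_mul_sum_sq_le
  obtain ⟨cB, hcB, hB'⟩ := hB.exists_pos_mul_sum_sq_le
  refine ⟨min cP cB, lt_min hcP hcB, fun Θ x => ⟨?_, ?_⟩⟩
  · calc min cP cB * ∑ j, x j ^ 2 ≤ cP * ∑ j, x j ^ 2 := by gcongr; exact min_le_left _ _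
      _ ≤ x ⬝ᵥ P *ᵥ x := hP' x
      _ ≤ trackingLyapunov P B Θs Θ x := le_add_of_nonneg_right <|
          Finset.sum_nonneg fun i _ => hB.posSemidef.dotProduct_mulVec_nonneg _
  · calc min cP cB * ∑ i, ∑ j, (Θ - Θs) i j ^ 2 ≤ ∑ i, cB * ∑ j, (Θ - Θs) i j ^ 2 := by
          rw [← Finset.mul_sum]; gcongr; exact min_le_right _ _
      _ ≤ ∑ i, (Θ - Θs) i ⬝ᵥ B *ᵥ (Θ - Θs) i := Finset.sum_le_sum fun i _ => hB' _
      _ ≤ trackingLyapunov P B Θs Θ x :=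
          le_add_of_nonneg_left (hP.posSemidef.dotProduct_mulVec_nonneg x)

theorem two_mul_dotProduct_mulVec_of_lyapunov_eq {P Q A₀ : Matrix m m ℝ} (hP : P.IsSymm)
    (hPA : P * A₀ + A₀ᵀ * P = -Q) (x : m → ℝ) :
    2 * (x ⬝ᵥ P *ᵥ (A₀ *ᵥ x)) = -(x ⬝ᵥ Q *ᵥ x) := by
  have h : x ⬝ᵥ (A₀ᵀ * P) *ᵥ x = x ⬝ᵥ P *ᵥ (A₀ *ᵥ x) := by
    rw [← mulVec_mulVec, dotProduct_mulVec, vecMul_transpose]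
    exact (hP.dotProduct_mulVec_comm _ _).symm
  calc 2 * (x ⬝ᵥ P *ᵥ (A₀ *ᵥ x)) = x ⬝ᵥ (P * A₀ + A₀ᵀ * P) *ᵥ x := by
        rw [add_mulVec, dotProduct_add, h, ← mulVec_mulVec]; ring
    _ = -(x ⬝ᵥ Q *ᵥ x) := by rw [hPA, neg_mulVec, dotProduct_neg]

theorem sum_dotProduct_mulVec_smul_eq {P B Kp S : Matrix m m ℝ} (hP : P.IsSymm)
    (hBS : B * Sᵀ = Kpᵀ) (x : m → ℝ) (Ψ : Matrix n m ℝ) (w : n → ℝ) :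
    ∑ i, Ψ i ⬝ᵥ B *ᵥ (w i • Sᵀ *ᵥ P *ᵥ x) = x ⬝ᵥ P *ᵥ Kp *ᵥ Ψᵀ *ᵥ w := by
  calc ∑ i, Ψ i ⬝ᵥ B *ᵥ (w i • Sᵀ *ᵥ P *ᵥ x) = ∑ i, w i * (Ψ i ⬝ᵥ Kpᵀ *ᵥ P *ᵥ x) := by
        simp only [mulVec_smul, mulVec_mulVec, ← Matrix.mul_assoc, hBS, dotProduct_smul,
          smul_eq_mul]
    _ = w ⬝ᵥ Ψ *ᵥ Kpᵀ *ᵥ P *ᵥ x := rfl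
    _ = (Ψᵀ *ᵥ w) ⬝ᵥ Kpᵀ *ᵥ P *ᵥ x :=
        (dotProduct_transpose_mulVec Ψ _ w).symm.trans (dotProduct_comm _ _)
    _ = P *ᵥ x ⬝ᵥ Kp *ᵥ Ψᵀ *ᵥ w := dotProduct_transpose_mulVec _ _ _
    _ = x ⬝ᵥ P *ᵥ Kp *ᵥ Ψᵀ *ᵥ w :=
        (dotProduct_comm _ _).trans (hP.dotProduct_mulVec_comm _ _)

theorem trackingLyapunov_deriv_eq {P Q A₀ B Kp S : Matrix m m ℝ} (hP : P.IsSymm)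
    (hPA : P * A₀ + A₀ᵀ * P = -Q) (hBS : B * Sᵀ = Kpᵀ) (x : m → ℝ) (Ψ : Matrix n m ℝ)
    (w : n → ℝ) :
    2 * (x ⬝ᵥ P *ᵥ (A₀ *ᵥ x + Kp *ᵥ Ψᵀ *ᵥ w)) + ∑ i, 2 * (Ψ i ⬝ᵥ B *ᵥ -(w i • Sᵀ *ᵥ P *ᵥ x))
      = -(x ⬝ᵥ Q *ᵥ x) := by
  simp only [mulVec_add, dotProduct_add, mulVec_neg, dotProduct_neg, ← Finset.mul_sum,
    Finset.sum_neg_distrib, sum_dotProduct_mulVec_smul_eq hP hBS]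
  linarith [two_mul_dotProduct_mulVec_of_lyapunov_eq hP hPA x]

theorem hasDerivAt_trackingLyapunov {P B : Matrix m m ℝ} (hP : P.IsSymm) (hB : B.IsSymm)
    (Θs : Matrix n m ℝ) {e : ℝ → m → ℝ} {Θ : ℝ → Matrix n m ℝ} {e₀' : m → ℝ}
    {Θ₀' : Matrix n m ℝ} {t : ℝ} (he : HasDerivAt e e₀' t)
    (hΘ : ∀ i, HasDerivAt (fun s => Θ s i) (Θ₀' i) t) :
    HasDerivAt (fun s => trackingLyapunov P B Θs (Θ s) (e s))
      (2 * (e t ⬝ᵥ P *ᵥ e₀') + ∑ i, 2 * ((Θ t - Θs) i ⬝ᵥ B *ᵥ Θ₀' i)) t :=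
  (he.dotProduct_mulVec_self hP).add
    (HasDerivAt.fun_sum fun i _ => ((hΘ i).sub_const (Θs i)).dotProduct_mulVec_self hB)

end LyapunovDesign

theorem relative_degree_one_tracking_error_properties_general
    (N M : ℕ)
    (A0 : Matrix (Fin M) (Fin M) ℝ)
    (P Q : Matrix (Fin M) (Fin M) ℝ) (hP : P.PosDef) (hQ : Q.PosDef)
    (hPA : P * A0 + A0ᵀ * P = -Q)
    (Kp S : Matrix (Fin M) (Fin M) ℝ) (hKp : IsUnit Kp.det)
    (hMs : (Kp⁻¹ * S).PosDef)
    (Θs : Matrix (Fin N) (Fin M) ℝ)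
    (ω : ℝ → Fin N → ℝ)
    (e e' : ℝ → Fin M → ℝ)
    (Θ Θ' : ℝ → Matrix (Fin N) (Fin M) ℝ)
    (hed : ∀ t j, HasDerivAt (fun s => e s j) (e' t j) t)
    (hΘd : ∀ t i j, HasDerivAt (fun s => Θ s i j) (Θ' t i j) t)
    (helaw : ∀ t, 0 ≤ t →
      e' t = A0.mulVec (e t) + Kp.mulVec ((Θ t - Θs)ᵀ.mulVec (ω t)))
    (hΘlaw : ∀ t, 0 ≤ t →
      (Θ' t)ᵀ = -Matrix.vecMulVec (Sᵀ.mulVec (P.mulVec (e t))) (ω t)) :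
    IntegrableOn (fun t => ∑ j, (e t j) ^ 2) (Set.Ici (0 : ℝ)) ∧
    (∃ C : ℝ, ∀ t, 0 ≤ t → Real.sqrt (∑ j, (e t j) ^ 2) ≤ C) ∧
    (∃ C : ℝ, ∀ t, 0 ≤ t → Real.sqrt (∑ i, ∑ j, (Θ t i j) ^ 2) ≤ C) := by
  set B := (Kp⁻¹ * S)⁻¹
  set V := fun t => trackingLyapunov P B Θs (Θ t) (e t)
  have hB : B.PosDef := hMs.inv
  have hPs : P.IsSymm := hP.isHermitian
  have hBs : B.IsSymm := hB.isHermitian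
  have hBS : B * Sᵀ = Kpᵀ :=
    inv_mul_transpose_eq_transpose hKp hMs.isHermitian hMs.det_pos.ne'.isUnit
  have hV : ∀ t, 0 ≤ t → HasDerivAt V (-(e t ⬝ᵥ Q *ᵥ e t)) t := fun t ht => by
    convert hasDerivAt_trackingLyapunov hPs hBs Θs
      (hasDerivAt_pi.2 (hed t)) (fun i => hasDerivAt_pi.2 (hΘd t i)) using 1
    simp only [helaw t ht, row_eq_neg_smul_of_transpose_eq_neg_vecMulVec (hΘlaw t ht)]
    exact (trackingLyapunov_deriv_eq hPs hPA hBS _ _ _).symm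
  have he : Continuous e :=
    continuous_pi fun j => continuous_iff_continuousAt.2 fun t => (hed t j).continuousAt
  have hQe : Continuous fun t => e t ⬝ᵥ Q *ᵥ e t := by fun_prop
  have hQe₀ : ∀ t, 0 ≤ e t ⬝ᵥ Q *ᵥ e t := fun t => hQ.posSemidef.dotProduct_mulVec_nonneg _
  obtain ⟨c, hc, hcV⟩ := exists_pos_mul_sum_sq_le_trackingLyapunov hP hB Θs
  have hV₀ : ∀ t, 0 ≤ V t := fun t =>
    (by positivity : 0 ≤ c * ∑ j, e t j ^ 2).trans (hcV _ _).1
  have hVle : ∀ t, 0 ≤ t → V t ≤ V 0 := fun t ht =>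
    apply_le_apply_zero_of_hasDerivAt_neg hQe hQe₀ hV ht
  obtain ⟨cQ, hcQ, hQ'⟩ := hQ.exists_pos_mul_sum_sq_le
  refine ⟨?_, ⟨√(V 0 / c), fun t ht => ?_⟩,
    ⟨√(2 * (V 0 / c) + 2 * ∑ i, ∑ j, Θs i j ^ 2), fun t ht => ?_⟩⟩
  · refine ((integrableOn_Ici_of_hasDerivAt_neg hQe hQe₀ (fun t _ => hV₀ t) hV).const_mul
      cQ⁻¹).mono' (by fun_prop : Continuous _).aestronglyMeasurable (ae_of_all _ fun t => ?_)
    rw [Real.norm_of_nonneg (by positivity), le_inv_mul_iff₀ hcQ]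
    exact hQ' (e t)
  · exact Real.sqrt_le_sqrt ((le_div_iff₀' hc).2 ((hcV _ _).1.trans (hVle t ht)))
  · refine Real.sqrt_le_sqrt ((sum_sq_le_two_mul_sum_sq_sub_add (Θ t) Θs).trans ?_)
    gcongr
    exact (le_div_iff₀' hc).2 ((hcV _ _).2.trans (hVle t ht))

/-- Relative-degree-one Lyapunov design: the tracking error is
square-integrable and bounded on `[0, ∞)`, and the parameter estimate is
bounded on `[0, ∞)` (`e ∈ L² ∩ L^∞`, `Θ ∈ L^∞`). -/
theorem relative_degree_one_tracking_error_properties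
    (N M : ℕ) (hN : 0 < N) (hM : 0 < M)
    (A0 : Matrix (Fin M) (Fin M) ℝ)
    (P Q : Matrix (Fin M) (Fin M) ℝ) (hP : P.PosDef) (hQ : Q.PosDef)
    (hPA : P * A0 + A0ᵀ * P = -Q)
    (Kp S : Matrix (Fin M) (Fin M) ℝ) (hKp : IsUnit Kp.det)
    (hMs : (Kp⁻¹ * S).PosDef)
    (Θs : Matrix (Fin N) (Fin M) ℝ)
    (ω : ℝ → Fin N → ℝ) (hωc : ∀ i, Continuous fun t => ω t i)
    (e e' : ℝ → Fin M → ℝ)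
    (Θ Θ' : ℝ → Matrix (Fin N) (Fin M) ℝ)
    (hed : ∀ t j, HasDerivAt (fun s => e s j) (e' t j) t)
    (hΘd : ∀ t i j, HasDerivAt (fun s => Θ s i j) (Θ' t i j) t)
    (helaw : ∀ t, 0 ≤ t →
      e' t = A0.mulVec (e t) + Kp.mulVec ((Θ t - Θs)ᵀ.mulVec (ω t)))
    (hΘlaw : ∀ t, 0 ≤ t →
      (Θ' t)ᵀ = -Matrix.vecMulVec (Sᵀ.mulVec (P.mulVec (e t))) (ω t)) :
    IntegrableOn (fun t => ∑ j, (e t j) ^ 2) (Set.Ici (0 : ℝ)) ∧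
    (∃ C : ℝ, ∀ t, 0 ≤ t → Real.sqrt (∑ j, (e t j) ^ 2) ≤ C) ∧
    (∃ C : ℝ, ∀ t, 0 ≤ t → Real.sqrt (∑ i, ∑ j, (Θ t i j) ^ 2) ≤ C) :=
  relative_degree_one_tracking_error_properties_general N M A0 P Q hP hQ hPA Kp S hKp hMs Θs ω e e'
    Θ Θ' hed hΘd helaw hΘlaw
end

section
/- Consider a discrete-time linear reference model system x_m(t+1) = A_m x_m(t) + b_m u_m(t), y_m(t) = c_m x_m(t), with x_m : ℕ → ℝ^n, u_m : ℕ → ℝ, y_m : ℕ → ℝ, A_m ∈ ℝ^{n×n}, b_m ∈ ℝ^n, c_m ∈ ℝ^{1×n}, and suppose c_m A_m^i b_m = 0 for all i = 0, 1, …, n_m* − 2 for some n_m* ≥ 1. Let 1 ≤ n* ≤ n_m* and let p_0, p_1, …, p_{n*−1} ∈ ℝ. Define r_m(t) = y_m(t + n*) + p_{n*−1} y_m(t + n* − 1) + ⋯ + p_1 y_m(t+1) + p_0 y_m(t). Then there exist α₁ ∈ ℝ^n and α₂ ∈ ℝ, depending only on (A_m, b_m, c_m) and the coefficients p_i, such that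 for every t ∈ ℕ, r_m(t) = α₁ᵀ x_m(t) + α₂ u_m(t). -/
open Matrix BigOperators

private lemma sum_dotProduct_aux {n : ℕ} (s : Finset ℕ) (f : ℕ → Fin n → ℝ)
    (v : Fin n → ℝ) : (∑ i ∈ s, f i) ⬝ᵥ v = ∑ i ∈ s, f i ⬝ᵥ v := by
  induction s using Finset.cons_induction with
  | empty => simp
  | cons a s h ih =>
    rw [Finset.sum_cons, Finset.sum_cons, add_dotProduct, ih]

/-- Parametrization of the equivalent reference input:
`r_m(t) = P_m(z)[y_m](t) = y_m(t+n*) + ∑_{i<n*} p_i y_m(t+i)` can be written as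
`r_m(t) = α₁ᵀ x_m(t) + α₂ u_m(t)` when the reference model has relative degree
at least `n_m* ≥ n*`. -/
theorem equivalent_reference_input_parametrization
    (n : ℕ) (nm ns : ℕ) (hns : 1 ≤ ns) (hnsnm : ns ≤ nm)
    (Am : Matrix (Fin n) (Fin n) ℝ) (bm : Fin n → ℝ) (cm : Fin n → ℝ)
    (xm : ℕ → Fin n → ℝ) (um ym : ℕ → ℝ)
    (hx : ∀ t, xm (t + 1) = Am.mulVec (xm t) + um t • bm)
    (hy : ∀ t, ym t = ∑ k, cm k * xm t k)
    (hmarkov : ∀ i : ℕ, i + 2 ≤ nm → (∑ k, cm k * ((Am ^ i).mulVec bm) k) = 0)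
    (p : ℕ → ℝ) (rm : ℕ → ℝ)
    (hrm : ∀ t, rm t = ym (t + ns) + ∑ i ∈ Finset.range ns, p i * ym (t + i)) :
    ∃ (α₁ : Fin n → ℝ) (α₂ : ℝ),
      ∀ t, rm t = (∑ k, α₁ k * xm t k) + α₂ * um t := by
  set γ : ℝ := cm ⬝ᵥ (Am ^ (nm - 1)).mulVec bm with hγ
  have key : ∀ i, i ≤ nm → ∀ t,
      ym (t + i) = cm ⬝ᵥ (Am ^ i).mulVec (xm t)
        + (if i = nm then γ else 0) * um t := by
    intro i
    induction i with
    | zero =>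
      intro hle t
      have hne : (0 : ℕ) ≠ nm := by omega
      simp [hne, hy t, pow_zero, Matrix.one_mulVec, dotProduct]
    | succ i ih =>
      intro hle t
      have hi : i ≤ nm := by omega
      have hne : i ≠ nm := by omega
      have h1 : t + (i + 1) = (t + 1) + i := by omega
      rw [h1, ih hi (t + 1), hx t]
      simp only [hne, if_neg, if_false, zero_mul, add_zero]
      rw [Matrix.mulVec_add, Matrix.mulVec_smul, dotProduct_add, dotProduct_smul,
        Matrix.mulVec_mulVec, ← pow_succ]
      by_cases h2 : i + 1 = nm
      · have : i = nm - 1 := by omega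
        rw [if_pos (by omega : i + 1 = nm)]
        simp [h2, this, hγ, smul_eq_mul, mul_comm]
      · have h3 : i + 2 ≤ nm := by omega
        have := hmarkov i h3
        have hd : cm ⬝ᵥ (Am ^ i).mulVec bm = 0 := this
        simp [h2, hd, smul_eq_mul]
  refine ⟨cm ᵥ* (Am ^ ns) + ∑ i ∈ Finset.range ns, p i • (cm ᵥ* (Am ^ i)),
    (if ns = nm then γ else 0), ?_⟩
  intro t
  have hsum : (∑ k, (cm ᵥ* (Am ^ ns) + ∑ i ∈ Finset.range ns, p i • (cm ᵥ* (Am ^ i))) k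
      * xm t k)
      = cm ⬝ᵥ (Am ^ ns).mulVec (xm t)
        + ∑ i ∈ Finset.range ns, p i * (cm ⬝ᵥ (Am ^ i).mulVec (xm t)) := by
    have : (∑ k, (cm ᵥ* (Am ^ ns) + ∑ i ∈ Finset.range ns, p i • (cm ᵥ* (Am ^ i))) k
        * xm t k)
        = (cm ᵥ* (Am ^ ns) + ∑ i ∈ Finset.range ns, p i • (cm ᵥ* (Am ^ i))) ⬝ᵥ xm t := rfl
    rw [this, add_dotProduct, sum_dotProduct_aux, Matrix.dotProduct_mulVec]
    congr 1
    refine Finset.sum_congr rfl fun i _ => ?_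
    rw [smul_dotProduct, Matrix.dotProduct_mulVec, smul_eq_mul]
  rw [hrm t, hsum, key ns hnsnm t]
  have hterm : ∀ i ∈ Finset.range ns, p i * ym (t + i)
      = p i * (cm ⬝ᵥ (Am ^ i).mulVec (xm t)) := by
    intro i hi
    have hilt : i < ns := Finset.mem_range.mp hi
    have hne : i ≠ nm := by omega
    rw [key i (by omega) t]
    simp [hne]
  rw [Finset.sum_congr rfl hterm]
  ring
end
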